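/- arXiv:1511.01184 — 2 statements merged into one kernel-verified Lean document; each statement's English description precedes it below -/
import Mathlib

section
/- Suppose λ10 > 1 or λ20 > 1 + δ. Then the equilibrium p0 = (0,0) attracts no points of Λ+: there is no solution u : [0,∞) → ℝ² of u' = F(u) with u(0) ∈ Λ+ and u(t) → (0,0) as t → ∞. -/
open Filter Topology Set

/-- Mean-field vector field of the generalized stacked contact process. -/
noncomputable def meanField (l10 l20 l21 δ : ℝ) (p : ℝ × ℝ) : ℝ × ℝ :=
  (l10 * p.1 * (1 - p.1 - p.2) - p.1 + δ * p.2 - l21 * p.1 * p.2,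
   l20 * p.2 * (1 - p.1 - p.2) - p.2 - δ * p.2 + l21 * p.1 * p.2)

/-- The feasible region Λ. -/
def lambdaRegion : Set (ℝ × ℝ) := {p | 0 ≤ p.1 ∧ 0 ≤ p.2 ∧ p.1 + p.2 ≤ 1}

/-- The region Λ₊ : if δ = 0 both coordinates positive, if δ > 0 only u₂ > 0. -/
def lambdaPlus (δ : ℝ) : Set (ℝ × ℝ) :=
  {p | p ∈ lambdaRegion ∧ 0 < p.2 ∧ (δ = 0 → 0 < p.1)}

/-- A solution of the mean-field ODE on [0,∞). -/
def IsSolution (l10 l20 l21 δ : ℝ) (u : ℝ → ℝ × ℝ) : Prop :=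
  ∀ t : ℝ, 0 ≤ t → HasDerivWithinAt u (meanField l10 l20 l21 δ (u t)) (Set.Ici 0) t

/-! Write `F₁ = r₁ u₁ + δ u₂` and `F₂ = r₂ u₂`, where the per-capita rates `r₁, r₂` are continuous
and equal `λ10 - 1` and `λ20 - 1 - δ` at the origin. A solution started in `Λ₊` keeps `u₂ > 0`,
`u₁ ≥ 0`, and `u₁ > 0` if `δ = 0`. If it converged to the origin, the relevant rate would
eventually be positive, making the corresponding coordinate strictly increasing from a
nonnegative value, which is incompatible with its convergence to `0`. -/

section ScalarComparison

variable {f f' g k : ℝ → ℝ} {a : ℝ}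

theorem pos_of_hasDerivWithinAt_linear
    (hf : ∀ x ≥ a, HasDerivWithinAt f (g x * f x + k x) (Ici a) x)
    (hg : ContinuousOn g (Ici a)) (hk : ∀ x ≥ a, 0 ≤ k x) (ha : 0 < f a) :
    ∀ x ≥ a, 0 < f x := by
  intro b hb
  obtain ⟨c, hc⟩ : BddBelow (g '' Icc a b) :=
    isCompact_Icc.bddBelow_image (hg.mono Icc_subset_Ici_self)
  -- `f` is fenced from below by the solution of `B' = (c - 1) B` with `B a = f a`.
  set B : ℝ → ℝ := fun x => f a * Real.exp ((c - 1) * (x - a))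
  have hB : ∀ x, HasDerivAt B ((c - 1) * B x) x := fun x => by
    have := (((hasDerivAt_id x).sub_const a).const_mul (c - 1)).exp.const_mul (f a)
    exact this.congr_deriv (by simp only [B, id]; ring)
  have hBpos : ∀ x, 0 < B x := fun x => mul_pos ha (Real.exp_pos _)
  have hle := image_le_of_deriv_right_lt_deriv_boundary (f := fun x => -f x)
    (B := fun x => -B x) (B' := fun x => -((c - 1) * B x))
    (fun x hx => (hf x hx.1).continuousWithinAt.neg.mono Icc_subset_Ici_self)
    (fun x hx => ((hf x hx.1).mono (Ici_subset_Ici.2 hx.1)).neg)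
    (by simp [B]) (fun x => (hB x).neg) ?_ (right_mem_Icc.2 hb)
  · linarith [hBpos b]
  · intro x hx hfx
    have hcx : c ≤ g x := hc ⟨x, Ico_subset_Icc_self hx, rfl⟩
    have hfx : f x = B x := neg_inj.1 hfx
    rw [hfx]
    linarith [mul_le_mul_of_nonneg_right hcx (hBpos x).le, hBpos x, hk x hx.1]

theorem nonneg_of_hasDerivWithinAt_pos_of_eq_zero
    (hf : ∀ x ≥ a, HasDerivWithinAt f (f' x) (Ici a) x)
    (hzero : ∀ x ≥ a, f x = 0 → 0 < f' x) (ha : 0 ≤ f a) : ∀ x ≥ a, 0 ≤ f x := by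
  intro b hb
  have hle := image_le_of_deriv_right_lt_deriv_boundary (f := fun x => -f x) (B := 0) (B' := 0)
    (fun x hx => (hf x hx.1).continuousWithinAt.neg.mono Icc_subset_Ici_self)
    (fun x hx => ((hf x hx.1).mono (Ici_subset_Ici.2 hx.1)).neg)
    (by simpa using ha) (fun x => hasDerivAt_const x 0)
    (fun x hx hfx => by simpa using hzero x hx.1 (by simpa using hfx)) (right_mem_Icc.2 hb)
  simpa using hle

theorem not_tendsto_zero_of_hasDerivWithinAt_pos
    (hf : ∀ x ≥ a, HasDerivWithinAt f (f' x) (Ici a) x)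
    (hpos : ∀ᶠ x in atTop, 0 < f' x) (hnonneg : ∀ x ≥ a, 0 ≤ f x) :
    ¬ Tendsto f atTop (𝓝 0) := by
  intro hlim
  obtain ⟨T, hT⟩ := eventually_atTop.1 (hpos.and (eventually_ge_atTop a))
  have hsub : Ici T ⊆ Ici a := Ici_subset_Ici.2 (hT T le_rfl).2
  have hmono : StrictMonoOn f (Ici T) := by
    refine strictMonoOn_of_hasDerivWithinAt_pos (f' := f') (convex_Ici T)
      (fun x hx => (hf x (hsub hx)).continuousWithinAt.mono hsub) ?_ ?_ <;> rw [interior_Ici]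
    · exact fun x hx => (hf x (hsub (mem_Ici.2 hx.le))).mono (Ioi_subset_Ici_self.trans hsub)
    · exact fun x hx => (hT x hx.le).1
  have hlt : f T < f (T + 1) := hmono self_mem_Ici (by simp) (by linarith)
  have hge : f (T + 1) ≤ 0 := ge_of_tendsto hlim <| (eventually_ge_atTop (T + 1)).mono
    fun x hx => hmono.monotoneOn (by simp) (by simp; linarith) hx
  linarith [hnonneg T (hsub self_mem_Ici)]

end ScalarComparison

def rateFst (l10 l21 : ℝ) (p : ℝ × ℝ) : ℝ := l10 * (1 - p.1 - p.2) - 1 - l21 * p.2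

def rateSnd (l20 l21 δ : ℝ) (p : ℝ × ℝ) : ℝ := l20 * (1 - p.1 - p.2) - 1 - δ + l21 * p.1

section MeanField

variable {l10 l20 l21 δ : ℝ}

theorem meanField_fst (p : ℝ × ℝ) :
    (meanField l10 l20 l21 δ p).1 = rateFst l10 l21 p * p.1 + δ * p.2 := by
  simp only [meanField, rateFst]; ring

theorem meanField_snd (p : ℝ × ℝ) :
    (meanField l10 l20 l21 δ p).2 = rateSnd l20 l21 δ p * p.2 := by
  simp only [meanField, rateSnd]; ring

theorem continuous_rateFst : Continuous (rateFst l10 l21) := by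
  unfold rateFst; fun_prop

theorem continuous_rateSnd : Continuous (rateSnd l20 l21 δ) := by
  unfold rateSnd; fun_prop

theorem rateFst_zero : rateFst l10 l21 0 = l10 - 1 := by simp [rateFst]

theorem rateSnd_zero : rateSnd l20 l21 δ 0 = l20 - 1 - δ := by simp [rateSnd]

end MeanField

namespace IsSolution

variable {l10 l20 l21 δ : ℝ} {u : ℝ → ℝ × ℝ}

theorem continuousOn (hu : IsSolution l10 l20 l21 δ u) : ContinuousOn u (Ici 0) :=
  fun t ht => (hu t ht).continuousWithinAt

theorem hasDerivWithinAt_fst (hu : IsSolution l10 l20 l21 δ u) :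
    ∀ t ≥ 0, HasDerivWithinAt (fun t => (u t).1)
      (rateFst l10 l21 (u t) * (u t).1 + δ * (u t).2) (Ici 0) t := fun t ht => by
  simpa [meanField_fst] using (hu t ht).hasFDerivWithinAt.fst.hasDerivWithinAt

theorem hasDerivWithinAt_snd (hu : IsSolution l10 l20 l21 δ u) :
    ∀ t ≥ 0, HasDerivWithinAt (fun t => (u t).2)
      (rateSnd l20 l21 δ (u t) * (u t).2) (Ici 0) t := fun t ht => by
  simpa [meanField_snd] using (hu t ht).hasFDerivWithinAt.snd.hasDerivWithinAt

theorem snd_pos (hu : IsSolution l10 l20 l21 δ u) (h0 : 0 < (u 0).2) :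
    ∀ t ≥ 0, 0 < (u t).2 :=
  pos_of_hasDerivWithinAt_linear (k := 0)
    (fun t ht => (hu.hasDerivWithinAt_snd t ht).congr_deriv (add_zero _).symm)
    (continuous_rateSnd.comp_continuousOn hu.continuousOn) (fun _ _ => le_rfl) h0

theorem fst_pos (hu : IsSolution l10 l20 l21 δ u) (hδ : 0 ≤ δ) (h2 : ∀ t ≥ 0, 0 ≤ (u t).2)
    (h0 : 0 < (u 0).1) : ∀ t ≥ 0, 0 < (u t).1 :=
  pos_of_hasDerivWithinAt_linear hu.hasDerivWithinAt_fst
    (continuous_rateFst.comp_continuousOn hu.continuousOn)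
    (fun t ht => mul_nonneg hδ (h2 t ht)) h0

theorem fst_nonneg (hu : IsSolution l10 l20 l21 δ u) (hδ : 0 < δ) (h2 : ∀ t ≥ 0, 0 < (u t).2)
    (h0 : 0 ≤ (u 0).1) : ∀ t ≥ 0, 0 ≤ (u t).1 :=
  nonneg_of_hasDerivWithinAt_pos_of_eq_zero hu.hasDerivWithinAt_fst
    (fun t ht h => by simpa [h] using mul_pos hδ (h2 t ht)) h0

theorem not_tendsto_zero_of_one_lt_l10 (hu : IsSolution l10 l20 l21 δ u) (hδ : 0 ≤ δ)
    (h : 1 < l10) (h0 : u 0 ∈ lambdaPlus δ) : ¬ Tendsto u atTop (𝓝 0) := by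
  intro hlim
  have hrate : ∀ᶠ t in atTop, 0 < rateFst l10 l21 (u t) :=
    ((rateFst_zero ▸ continuous_rateFst.tendsto 0).comp hlim).eventually_const_lt (by linarith)
  have h2 := hu.snd_pos h0.2.1
  have hlim1 : Tendsto (fun t => (u t).1) atTop (𝓝 0) := (continuous_fst.tendsto 0).comp hlim
  rcases hδ.eq_or_lt with rfl | hδ
  · have h1 := hu.fst_pos le_rfl (fun t ht => (h2 t ht).le) (h0.2.2 rfl)
    refine not_tendsto_zero_of_hasDerivWithinAt_pos hu.hasDerivWithinAt_fst ?_
      (fun t ht => (h1 t ht).le) hlim1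
    filter_upwards [hrate, eventually_ge_atTop 0] with t hr ht
    simpa using mul_pos hr (h1 t ht)
  · have h1 := hu.fst_nonneg hδ h2 h0.1.1
    refine not_tendsto_zero_of_hasDerivWithinAt_pos hu.hasDerivWithinAt_fst ?_ h1 hlim1
    filter_upwards [hrate, eventually_ge_atTop 0] with t hr ht
    exact add_pos_of_nonneg_of_pos (mul_nonneg hr.le (h1 t ht)) (mul_pos hδ (h2 t ht))

theorem not_tendsto_zero_of_one_add_lt_l20 (hu : IsSolution l10 l20 l21 δ u) (h : 1 + δ < l20)
    (h0 : 0 < (u 0).2) : ¬ Tendsto u atTop (𝓝 0) := by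
  intro hlim
  have hrate : ∀ᶠ t in atTop, 0 < rateSnd l20 l21 δ (u t) :=
    ((rateSnd_zero ▸ continuous_rateSnd.tendsto 0).comp hlim).eventually_const_lt (by linarith)
  have h2 := hu.snd_pos h0
  refine not_tendsto_zero_of_hasDerivWithinAt_pos hu.hasDerivWithinAt_snd ?_
    (fun t ht => (h2 t ht).le) ((continuous_snd.tendsto 0).comp hlim)
  filter_upwards [hrate, eventually_ge_atTop 0] with t hr ht
  exact mul_pos hr (h2 t ht)

end IsSolution

theorem origin_attracts_no_point_of_lambdaPlus_general
    (l10 l20 l21 δ : ℝ) (hδ : 0 ≤ δ)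
    (h : 1 < l10 ∨ 1 + δ < l20) :
    ¬ ∃ u : ℝ → ℝ × ℝ, IsSolution l10 l20 l21 δ u ∧ u 0 ∈ lambdaPlus δ ∧
        Tendsto u atTop (𝓝 ((0 : ℝ), (0 : ℝ))) := by
  rintro ⟨u, hu, hu0, hlim⟩
  rcases h with h | h
  · exact hu.not_tendsto_zero_of_one_lt_l10 hδ h hu0 hlim
  · exact hu.not_tendsto_zero_of_one_add_lt_l20 h hu0.2.1 hlim

/-- If λ10 > 1 or λ20 > 1 + δ, the equilibrium (0,0) attracts no points of Λ₊. -/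
theorem origin_attracts_no_point_of_lambdaPlus
    (l10 l20 l21 δ : ℝ) (h10 : 0 ≤ l10) (h20 : 0 ≤ l20) (h21 : 0 ≤ l21) (hδ : 0 ≤ δ)
    (h : 1 < l10 ∨ 1 + δ < l20) :
    ¬ ∃ u : ℝ → ℝ × ℝ, IsSolution l10 l20 l21 δ u ∧ u 0 ∈ lambdaPlus δ ∧
        Tendsto u atTop (𝓝 ((0 : ℝ), (0 : ℝ))) :=
  origin_attracts_no_point_of_lambdaPlus_general l10 l20 l21 δ hδ h
end

section
/- Suppose δ = 0, λ20 > 1 and λ10/λ20 − λ21·(1 − 1/λ20) > 1. Then the equilibrium p2 = (0, 1 − 1/λ20) attracts no points of Λ+: there is no solution u : [0,∞) → ℝ² of u' = F(u) with u(0) ∈ Λ+ and u(t) → (0, 1 − 1/λ20) as t → ∞. -/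
/-!
Along a solution with `δ = 0` the first coordinate solves the scalar linear equation
`u₁' = u₁ · r(t)`, where `r = λ10 (1 - u₁ - u₂) - 1 - λ21 u₂` is the per-capita growth rate of
type 1. Hence `u₁(t) = u₁(0) · exp ∫₀ᵗ r`. If `u → p₂`, then `r(t) → λ10/λ20 - λ21 (1 - 1/λ20) - 1`,
which is positive by the invasion condition; so `u₁` never vanishes and `|u₁|` is eventually
nondecreasing, hence `u₁` cannot tend to `0`.
-/

open Filter Topology Set

open Real

theorem eq_mul_exp_integral_of_hasDerivWithinAt_mul {f g : ℝ → ℝ} {a : ℝ}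
    (hg : ContinuousOn g (Ici a)) (hf : ∀ t ≥ a, HasDerivWithinAt f (f t * g t) (Ici a) t)
    {t : ℝ} (ht : a ≤ t) :
    f t = f a * exp (∫ s in a..t, g s) := by
  -- `g ∘ max a` is a continuous extension of `g` to all of `ℝ`, so FTC applies everywhere.
  set g' : ℝ → ℝ := fun s => g (max a s)
  have hg' : Continuous g' :=
    hg.comp_continuous (continuous_const.max continuous_id) fun s => le_max_left a s
  set G : ℝ → ℝ := fun s => ∫ r in a..s, g' r
  have hG : ∀ s, HasDerivAt G (g' s) s := fun s => (hg'.integral_hasStrictDerivAt a s).hasDerivAt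
  have hfcont : ContinuousOn f (Icc a t) := fun s hs =>
    (hf s hs.1).continuousWithinAt.mono Icc_subset_Ici_self
  have hconst : ∀ s ∈ Icc a t, f s * exp (-G s) = f a * exp (-G a) := by
    refine constant_of_has_deriv_right_zero
      (hfcont.mul fun s _ => (hG s).continuousAt.neg.rexp.continuousWithinAt) fun s hs => ?_
    refine (((hf s hs.1).mono (Ici_subset_Ici.2 hs.1)).mul
      (hG s).neg.exp.hasDerivWithinAt).congr_deriv ?_
    simp only [g', max_eq_right hs.1]
    ring
  have hGt : G t = ∫ s in a..t, g s :=
    intervalIntegral.integral_congr fun s hs => by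
      rw [uIcc_of_le ht] at hs
      simp only [g', max_eq_right hs.1]
  have hGa : G a = 0 := intervalIntegral.integral_same
  have h := hconst t ⟨ht, le_rfl⟩
  rwa [hGa, neg_zero, exp_zero, mul_one, exp_neg, ← div_eq_mul_inv, div_eq_iff (exp_pos _).ne',
    hGt] at h

theorem not_tendsto_zero_of_hasDerivWithinAt_mul {f g : ℝ → ℝ} {a : ℝ}
    (hg : ContinuousOn g (Ici a)) (hf : ∀ t ≥ a, HasDerivWithinAt f (f t * g t) (Ici a) t)
    (hfa : f a ≠ 0) (hg_nonneg : ∀ᶠ t in atTop, 0 ≤ g t) :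
    ¬ Tendsto f atTop (𝓝 0) := by
  intro hlim
  obtain ⟨T, hT⟩ := eventually_atTop.1 (hg_nonneg.and (eventually_ge_atTop a))
  have hTa : a ≤ T := (hT T le_rfl).2
  have hfT : f T ≠ 0 := by
    rw [eq_mul_exp_integral_of_hasDerivWithinAt_mul hg hf hTa]
    exact mul_ne_zero hfa (exp_pos _).ne'
  have hgrow : ∀ t ≥ T, |f T| ≤ |f t| := by
    intro t ht
    have hfT' : ∀ s ≥ T, HasDerivWithinAt f (f s * g s) (Ici T) s := fun s hs =>
      (hf s (hTa.trans hs)).mono (Ici_subset_Ici.2 hTa)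
    rw [eq_mul_exp_integral_of_hasDerivWithinAt_mul (hg.mono (Ici_subset_Ici.2 hTa)) hfT' ht,
      abs_mul, abs_of_pos (exp_pos _)]
    exact le_mul_of_one_le_right (abs_nonneg _)
      (one_le_exp (intervalIntegral.integral_nonneg ht fun s hs => (hT s hs.1).1))
  obtain ⟨t, hsmall, hlarge⟩ :=
    ((Metric.tendsto_nhds.1 hlim |f T| (abs_pos.2 hfT)).and (eventually_ge_atTop T)).exists
  rw [Real.dist_0_eq_abs] at hsmall
  exact (hgrow t hlarge).not_gt hsmall

def fstGrowthRate (l10 l21 : ℝ) (p : ℝ × ℝ) : ℝ :=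
  l10 * (1 - p.1 - p.2) - 1 - l21 * p.2

theorem continuous_fstGrowthRate (l10 l21 : ℝ) : Continuous (fstGrowthRate l10 l21) := by
  unfold fstGrowthRate
  fun_prop

theorem meanField_fst_of_delta_zero (l10 l20 l21 : ℝ) (p : ℝ × ℝ) :
    (meanField l10 l20 l21 0 p).1 = p.1 * fstGrowthRate l10 l21 p := by
  simp only [meanField, fstGrowthRate]
  ring

theorem IsSolution.continuousOn_s13 {l10 l20 l21 δ : ℝ} {u : ℝ → ℝ × ℝ}
    (hu : IsSolution l10 l20 l21 δ u) : ContinuousOn u (Ici 0) := fun t ht =>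
  (hu t ht).continuousWithinAt

theorem IsSolution.hasDerivWithinAt_fst_s13 {l10 l20 l21 δ : ℝ} {u : ℝ → ℝ × ℝ}
    (hu : IsSolution l10 l20 l21 δ u) {t : ℝ} (ht : 0 ≤ t) :
    HasDerivWithinAt (fun s => (u s).1) (meanField l10 l20 l21 δ (u t)).1 (Ici 0) t :=
  (ContinuousLinearMap.fst ℝ ℝ ℝ).hasFDerivAt.comp_hasDerivWithinAt t (hu t ht)

theorem p2_attracts_no_point_of_lambdaPlus_general
    (l10 l20 l21 δ : ℝ)
    (hδ0 : δ = 0)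
    (h1in2 : l10 / l20 - l21 * (1 - 1 / l20) > 1) :
    ¬ ∃ u : ℝ → ℝ × ℝ, IsSolution l10 l20 l21 δ u ∧ u 0 ∈ lambdaPlus δ ∧
        Tendsto u atTop (𝓝 ((0, 1 - 1 / l20) : ℝ × ℝ)) := by
  subst hδ0
  rintro ⟨u, hsol, ⟨-, -, hu0⟩, hlim⟩
  set r : ℝ → ℝ := fun t => fstGrowthRate l10 l21 (u t)
  have hr : ContinuousOn r (Ici 0) :=
    (continuous_fstGrowthRate l10 l21).comp_continuousOn hsol.continuousOn_s13
  have hderiv : ∀ t ≥ 0, HasDerivWithinAt (fun s => (u s).1) ((u t).1 * r t) (Ici 0) t :=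
    fun t ht => by simpa only [meanField_fst_of_delta_zero] using hsol.hasDerivWithinAt_fst_s13 ht
  have hr_lim : Tendsto r atTop (𝓝 (fstGrowthRate l10 l21 (0, 1 - 1 / l20))) :=
    ((continuous_fstGrowthRate l10 l21).tendsto _).comp hlim
  have hr_pos : 0 < fstGrowthRate l10 l21 (0, 1 - 1 / l20) := by
    have hp2 : fstGrowthRate l10 l21 (0, 1 - 1 / l20) = l10 / l20 - l21 * (1 - 1 / l20) - 1 := by
      simp only [fstGrowthRate]
      ring
    linarith
  exact not_tendsto_zero_of_hasDerivWithinAt_mul hr hderiv (hu0 rfl).ne'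
    (hr_lim.eventually (eventually_ge_nhds hr_pos)) ((continuous_fst.tendsto _).comp hlim)

/-- If δ = 0, λ20 > 1 and the (1s invade 2s) inequality holds, the equilibrium
p₂ = (0, 1 − 1/λ20) attracts no points of Λ₊. -/
theorem p2_attracts_no_point_of_lambdaPlus
    (l10 l20 l21 δ : ℝ) (h10 : 0 ≤ l10) (h20 : 0 < l20) (h21 : 0 ≤ l21) (hδ : 0 ≤ δ)
    (hδ0 : δ = 0) (h20gt : 1 < l20)
    (h1in2 : l10 / l20 - l21 * (1 - 1 / l20) > 1) :
    ¬ ∃ u : ℝ → ℝ × ℝ, IsSolution l10 l20 l21 δ u ∧ u 0 ∈ lambdaPlus δ ∧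
        Tendsto u atTop (𝓝 ((0, 1 - 1 / l20) : ℝ × ℝ)) :=
  p2_attracts_no_point_of_lambdaPlus_general l10 l20 l21 δ hδ0 h1in2
end
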